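/- arXiv:2309.02606 — 5 statements merged into one kernel-verified Lean document; each statement's English description precedes it below -/
import Mathlib

section
/- Let p be a pdf on ℝ^l, let ℓ : ℝ^l → [0,∞) be measurable with Z = ∫ ℓ(θ) p(θ) dθ ∈ (0,∞). Let q be a pdf on ℝ^l with q(θ) = 0 for almost every θ with p(θ) = 0, and suppose θ ↦ q(θ) log ℓ(θ) and θ ↦ q(θ) log(q(θ)/p(θ)) are Lebesgue integrable. Then the evidence lower bound holds: log Z ≥ ∫ q(θ) log ℓ(θ) dθ − KL(q‖p). -/
open MeasureTheory Real

/- The tangent-line bound `log x ≤ x - 1` at `x = ℓ p / (q Z)`, multiplied by `q`, gives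
`q log ℓ - q log (q / p) ≤ q log Z + ℓ p / Z - q` pointwise (trivially where `q = 0`).
Integrating, the right-hand side becomes `log Z + Z / Z - 1 = log Z`. -/

lemma mul_log_sub_mul_log_div_le {q ℓ p Z : ℝ} (hq : 0 ≤ q) (hℓ : 0 ≤ ℓ) (hp : 0 ≤ p)
    (hZ : 0 < Z) (hpq : p = 0 → q = 0) (hℓq : ℓ = 0 → q = 0) :
    q * log ℓ - q * log (q / p) ≤ q * log Z + ℓ * p / Z - q := by
  rcases hq.eq_or_lt with rfl | hq
  · simpa using div_nonneg (mul_nonneg hℓ hp) hZ.le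
  have hp : 0 < p := hp.lt_of_ne fun h => hq.ne' (hpq h.symm)
  have hℓ : 0 < ℓ := hℓ.lt_of_ne fun h => hq.ne' (hℓq h.symm)
  have tangent := mul_le_mul_of_nonneg_left
    (log_le_sub_one_of_pos (by positivity : 0 < ℓ * p / (q * Z))) hq.le
  rw [log_div (by positivity) (by positivity), log_mul hℓ.ne' hp.ne',
    log_mul hq.ne' hZ.ne'] at tangent
  rw [log_div hq.ne' hp.ne']
  have hcancel : q * (ℓ * p / (q * Z) - 1) = ℓ * p / Z - q := by
    field_simp
  linarith

theorem stmt_1_general (l : ℕ) (p ℓ q : (Fin l → ℝ) → ℝ)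
    (hp_nonneg : ∀ θ, 0 ≤ p θ)
    (hℓ_nonneg : ∀ θ, 0 ≤ ℓ θ)
    (Z : ℝ) (hZ : Z = ∫ θ, ℓ θ * p θ)
    (hZ_pos : 0 < Z) (hZ_fin : Integrable (fun θ => ℓ θ * p θ))
    (hq_nonneg : ∀ θ, 0 ≤ q θ)
    (hq_int : ∫ θ, q θ = 1)
    (hq0 : ∀ᵐ (θ : Fin l → ℝ) ∂volume, p θ = 0 → q θ = 0)
    (hqℓ : ∀ᵐ (θ : Fin l → ℝ) ∂volume, ℓ θ = 0 → q θ = 0)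
    (h1 : Integrable (fun θ => q θ * Real.log (ℓ θ)))
    (h2 : Integrable (fun θ => q θ * Real.log (q θ / p θ))) :
    Real.log Z ≥
      (∫ θ, q θ * Real.log (ℓ θ)) - (∫ θ, q θ * Real.log (q θ / p θ)) := by
  have hq_integrable : Integrable q := Integrable.of_integral_ne_zero (by simp [hq_int])
  have hqZ_int : Integrable fun θ => q θ * log Z + ℓ θ * p θ / Z :=
    (hq_integrable.mul_const _).add (hZ_fin.div_const Z)
  have hbound_int : Integrable fun θ => q θ * log Z + ℓ θ * p θ / Z - q θ :=
    hqZ_int.sub hq_integrable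
  have hbound : ∫ θ, (q θ * log Z + ℓ θ * p θ / Z - q θ) = log Z := by
    rw [integral_sub hqZ_int hq_integrable,
      integral_add (hq_integrable.mul_const _) (hZ_fin.div_const Z), integral_mul_const,
      integral_div, ← hZ, hq_int, div_self hZ_pos.ne']
    ring
  rw [ge_iff_le, ← integral_sub h1 h2, ← hbound]
  refine integral_mono_ae (h1.sub h2) hbound_int ?_
  filter_upwards [hq0, hqℓ] with θ hpq hℓq
  exact mul_log_sub_mul_log_div_le (hq_nonneg θ) (hℓ_nonneg θ) (hp_nonneg θ) hZ_pos hpq hℓq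

/-- the evidence lower bound `log Z ≥ ∫ q log ℓ − KL(q‖p)`.
The hypothesis `hqℓ` encodes the a.e. finiteness part of the Lebesgue
integrability of `θ ↦ q θ * log (ℓ θ)` (where `log 0 = −∞`), which a
real-valued `Integrable` statement cannot express. -/
theorem stmt_1 (l : ℕ) (p ℓ q : (Fin l → ℝ) → ℝ)
    (hp_meas : Measurable p) (hp_nonneg : ∀ θ, 0 ≤ p θ)
    (hp_int : ∫ θ, p θ = 1)
    (hℓ_meas : Measurable ℓ) (hℓ_nonneg : ∀ θ, 0 ≤ ℓ θ)
    (Z : ℝ) (hZ : Z = ∫ θ, ℓ θ * p θ)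
    (hZ_pos : 0 < Z) (hZ_fin : Integrable (fun θ => ℓ θ * p θ))
    (hq_meas : Measurable q) (hq_nonneg : ∀ θ, 0 ≤ q θ)
    (hq_int : ∫ θ, q θ = 1)
    (hq0 : ∀ᵐ (θ : Fin l → ℝ) ∂volume, p θ = 0 → q θ = 0)
    (hqℓ : ∀ᵐ (θ : Fin l → ℝ) ∂volume, ℓ θ = 0 → q θ = 0)
    (h1 : Integrable (fun θ => q θ * Real.log (ℓ θ)))
    (h2 : Integrable (fun θ => q θ * Real.log (q θ / p θ))) :
    Real.log Z ≥
      (∫ θ, q θ * Real.log (ℓ θ)) - (∫ θ, q θ * Real.log (q θ / p θ)) :=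
  stmt_1_general l p ℓ q hp_nonneg hℓ_nonneg Z hZ hZ_pos hZ_fin hq_nonneg hq_int hq0 hqℓ h1 h2
end

section
/- Let p_1,…,p_n be pdfs on ℝ^l that are strictly positive everywhere, let ℓ_1,…,ℓ_n : ℝ^l → [0,∞) be measurable likelihood functions, and let A ∈ ℝ^{n×n} be a doubly stochastic matrix. Set K = ∫ ∏_{i=1}^n p_i(θ)^{1/n} dθ and N = ∫ ∏_{i=1}^n ℓ_i(θ) · ∏_{i=1}^n p_i(θ)^{1/n} dθ, and assume K, N ∈ (0,∞). Let q be a pdf on ℝ^l such that θ ↦ q(θ) log ℓ_i(θ) and θ ↦ q(θ) log(q(θ)/p_j(θ)) are Lebesgue integrable for all i, j. Then the distributed evidence lower bound (DELBO) holds: log(N/K) ≥ ∑_{i=1}^n [ ∫ q(θ) log ℓ_i(θ) dθ − (1/n) ∑_{j=1}^n A_{ij} ∫ q(θ) log(q(θ)/p_j(θ)) dθ ]. -/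
/-!
Since the columns of `A` sum to one, the right-hand side collapses to
`∑ᵢ ∫ q log ℓᵢ - (1/n) ∑ⱼ ∫ q log (q/pⱼ) = ∫ q log (g/q)` for the unnormalised posterior
`g = ∏ᵢ ℓᵢ · ∏ᵢ pᵢ^{1/n}`. Gibbs' inequality (`log x ≤ x - 1` at `x = g/(N q)`) bounds this by
`log ∫ g = log N`, and the weighted AM-GM inequality under the integral gives `K ≤ 1`, so that
`log N ≤ log (N/K)`.
-/

open MeasureTheory Real Finset

theorem Matrix.sum_sum_mul_of_sum_col_eq_one {ι : Type*} [Fintype ι] {A : Matrix ι ι ℝ}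
    (hA : ∀ j, ∑ i, A i j = 1) (x : ι → ℝ) : ∑ i, ∑ j, A i j * x j = ∑ j, x j := by
  rw [sum_comm]
  simp [← sum_mul, hA]

theorem Real.log_prod_mul_prod_rpow_div {ι : Type*} [Fintype ι] {ℓ p w : ι → ℝ} {q : ℝ}
    (hw : ∑ i, w i = 1) (hq : q ≠ 0) (hℓ : ∀ i, ℓ i ≠ 0) (hp : ∀ i, 0 < p i) :
    log ((∏ i, ℓ i) * (∏ i, p i ^ w i) / q) = ∑ i, log (ℓ i) - ∑ i, w i * log (q / p i) := by
  have hpw : ∏ i, p i ^ w i ≠ 0 := (prod_pos fun i _ => rpow_pos_of_pos (hp i) _).ne'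
  rw [log_div (mul_ne_zero (prod_ne_zero_iff.2 fun i _ => hℓ i) hpw) hq,
    log_mul (prod_ne_zero_iff.2 fun i _ => hℓ i) hpw, log_prod fun i _ => hℓ i,
    log_prod fun i _ => (rpow_pos_of_pos (hp i) _).ne']
  simp only [log_rpow (hp _), log_div hq (hp _).ne', mul_sub, sum_sub_distrib, ← sum_mul, hw]
  ring

theorem Real.mul_log_div_sub_mul_log_le {q g N : ℝ} (hq : 0 ≤ q) (hg : 0 ≤ g) (hN : 0 < N)
    (hqg : g = 0 → q = 0) : q * log (g / q) - q * log N ≤ g / N - q := by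
  rcases hq.eq_or_lt with rfl | hq
  · simpa using div_nonneg hg hN.le
  have hg : 0 < g := hg.lt_of_ne fun h => hq.ne' (hqg h.symm)
  calc q * log (g / q) - q * log N = q * log (g / (N * q)) := by
        rw [log_div hg.ne' hq.ne', log_div hg.ne' (by positivity), log_mul hN.ne' hq.ne']
        ring
    _ ≤ q * (g / (N * q) - 1) :=
        mul_le_mul_of_nonneg_left (log_le_sub_one_of_pos (by positivity)) hq.le
    _ = g / N - q := by field_simp

section

variable {α : Type*} [MeasurableSpace α] {μ : Measure α}

theorem MeasureTheory.integral_prod_rpow_le_one {ι : Type*} [Fintype ι] {p : ι → α → ℝ}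
    {w : ι → ℝ} (hw : ∀ i, 0 ≤ w i) (hw1 : ∑ i, w i = 1) (hp : ∀ i, 0 ≤ᵐ[μ] p i)
    (hp1 : ∀ i, ∫ x, p i x ∂μ = 1) : ∫ x, ∏ i, p i x ^ w i ∂μ ≤ 1 := by
  have hpi : ∀ i, Integrable (p i) μ := fun i =>
    Integrable.of_integral_ne_zero (by simp [hp1])
  calc ∫ x, ∏ i, p i x ^ w i ∂μ ≤ ∫ x, ∑ i, w i * p i x ∂μ := by
        refine integral_mono_of_nonneg ?_
          (integrable_finsetSum _ fun i _ => (hpi i).const_mul _) ?_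
        · filter_upwards [ae_all_iff.2 hp] with x hx
          exact prod_nonneg fun i _ => rpow_nonneg (hx i) _
        · filter_upwards [ae_all_iff.2 hp] with x hx
          exact geom_mean_le_arith_mean_weighted _ _ _ (fun i _ => hw i) hw1 fun i _ => hx i
    _ = 1 := by
        rw [integral_finsetSum _ fun i _ => (hpi i).const_mul _]
        simp [integral_const_mul, hp1, hw1]

theorem MeasureTheory.integral_mul_log_div_le_log_integral {q g : α → ℝ} (hq : 0 ≤ᵐ[μ] q)
    (hq1 : ∫ x, q x ∂μ = 1) (hg : 0 ≤ᵐ[μ] g) (hgi : Integrable g μ) (hg0 : 0 < ∫ x, g x ∂μ)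
    (hqg : ∀ᵐ x ∂μ, g x = 0 → q x = 0) (hqlog : Integrable (fun x => q x * log (g x / q x)) μ) :
    ∫ x, q x * log (g x / q x) ∂μ ≤ log (∫ x, g x ∂μ) := by
  set N := ∫ x, g x ∂μ
  have hqi : Integrable q μ := Integrable.of_integral_ne_zero (by simp [hq1])
  have key : ∫ x, (q x * log (g x / q x) - q x * log N) ∂μ ≤ ∫ x, (g x / N - q x) ∂μ :=
    integral_mono_ae (hqlog.sub (hqi.mul_const _)) ((hgi.div_const N).sub hqi) <| by
      filter_upwards [hq, hg, hqg] with x hqx hgx hqgx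
      exact mul_log_div_sub_mul_log_le hqx hgx hg0 hqgx
  rw [integral_sub hqlog (hqi.mul_const _), integral_sub (hgi.div_const N) hqi,
    integral_mul_const, integral_div, hq1, div_self hg0.ne'] at key
  linarith

theorem MeasureTheory.sum_integral_mul_log_sub_le_log_integral {ι : Type*} [Fintype ι]
    {q : α → ℝ} {ℓ p : ι → α → ℝ} {w : ι → ℝ} (hw : ∑ i, w i = 1) (hq : ∀ x, 0 ≤ q x)
    (hq1 : ∫ x, q x ∂μ = 1) (hℓ : ∀ i x, 0 ≤ ℓ i x) (hqℓ : ∀ i, ∀ᵐ x ∂μ, ℓ i x = 0 → q x = 0)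
    (hp : ∀ i x, 0 < p i x)
    (hgi : Integrable (fun x => (∏ i, ℓ i x) * ∏ i, p i x ^ w i) μ)
    (hg0 : 0 < ∫ x, (∏ i, ℓ i x) * ∏ i, p i x ^ w i ∂μ)
    (hℓi : ∀ i, Integrable (fun x => q x * log (ℓ i x)) μ)
    (hpi : ∀ i, Integrable (fun x => q x * log (q x / p i x)) μ) :
    ∑ i, ∫ x, q x * log (ℓ i x) ∂μ - ∑ i, w i * ∫ x, q x * log (q x / p i x) ∂μ
      ≤ log (∫ x, (∏ i, ℓ i x) * ∏ i, p i x ^ w i ∂μ) := by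
  set g : α → ℝ := fun x => (∏ i, ℓ i x) * ∏ i, p i x ^ w i
  have hpw : ∀ x, ∏ i, p i x ^ w i ≠ 0 := fun x =>
    (prod_pos fun i _ => rpow_pos_of_pos (hp i x) _).ne'
  have hg_zero : ∀ᵐ x ∂μ, g x = 0 → q x = 0 := by
    filter_upwards [ae_all_iff.2 hqℓ] with x hx hgx
    obtain ⟨i, -, hi⟩ := prod_eq_zero_iff.1 ((mul_eq_zero.1 hgx).resolve_right (hpw x))
    exact hx i hi
  have hintegrand : (fun x => ∑ i, q x * log (ℓ i x) - ∑ i, w i * (q x * log (q x / p i x)))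
      =ᵐ[μ] fun x => q x * log (g x / q x) := by
    filter_upwards [ae_all_iff.2 hqℓ] with x hx
    rcases (hq x).eq_or_lt with h | h
    · simp [← h]
    rw [log_prod_mul_prod_rpow_div hw h.ne' (fun i hi => h.ne' (hx i hi)) (hp · x)]
    simp only [mul_sub, mul_sum, mul_left_comm]
  have hintegrand_int : Integrable (fun x => ∑ i, q x * log (ℓ i x)
      - ∑ i, w i * (q x * log (q x / p i x))) μ :=
    (integrable_finsetSum _ fun i _ => hℓi i).sub
      (integrable_finsetSum _ fun i _ => (hpi i).const_mul _)
  have hgibbs := integral_mul_log_div_le_log_integral (ae_of_all _ hq) hq1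
    (ae_of_all _ fun x => mul_nonneg (prod_nonneg fun i _ => hℓ i x)
      (prod_nonneg fun i _ => rpow_nonneg (hp i x).le _))
    hgi hg0 hg_zero (hintegrand_int.congr hintegrand)
  rw [← integral_congr_ae hintegrand, integral_sub (integrable_finsetSum _ fun i _ => hℓi i)
    (integrable_finsetSum _ fun i _ => (hpi i).const_mul _), integral_finsetSum _ fun i _ => hℓi i,
    integral_finsetSum _ fun i _ => (hpi i).const_mul _] at hgibbs
  simpa only [integral_const_mul] using hgibbs

end

theorem stmt_3_general (l n : ℕ) (p ℓ : Fin n → (Fin l → ℝ) → ℝ) (hp_pos : ∀ i θ, 0 < p i θ)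
    (hp_int : ∀ i, ∫ θ, p i θ = 1) (hℓ_nonneg : ∀ i θ, 0 ≤ ℓ i θ)
    (A : Matrix (Fin n) (Fin n) ℝ)
    (hA_col : ∀ j, ∑ i, A i j = 1)
    (K N : ℝ)
    (hK : K = ∫ θ, ∏ i, p i θ ^ (1 / (n : ℝ)))
    (hN : N = ∫ θ, (∏ i, ℓ i θ) * ∏ i, p i θ ^ (1 / (n : ℝ)))
    (hK_pos : 0 < K) (hN_pos : 0 < N)
    (hN_fin : Integrable (fun θ => (∏ i, ℓ i θ) * ∏ i, p i θ ^ (1 / (n : ℝ))))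
    (q : (Fin l → ℝ) → ℝ) (hq_nonneg : ∀ θ, 0 ≤ q θ)
    (hq_int : ∫ θ, q θ = 1)
    (hqℓ : ∀ i, ∀ᵐ (θ : Fin l → ℝ) ∂volume, ℓ i θ = 0 → q θ = 0)
    (h1 : ∀ i, Integrable (fun θ => q θ * Real.log (ℓ i θ)))
    (h2 : ∀ j, Integrable (fun θ => q θ * Real.log (q θ / p j θ))) :
    Real.log (N / K) ≥
      ∑ i, ((∫ θ, q θ * Real.log (ℓ i θ))
        - (1 / (n : ℝ)) * ∑ j, A i j * ∫ θ, q θ * Real.log (q θ / p j θ)) := by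
  obtain rfl | hn := n.eq_zero_or_pos
  · have hNK : N = K := by simp [hN, hK]
    simp [hNK, hK_pos.ne']
  have hw : ∑ _i : Fin n, 1 / (n : ℝ) = 1 := by simp [hn.ne']
  have hK1 : K ≤ 1 := hK ▸ integral_prod_rpow_le_one (fun _ => by positivity) hw
    (fun i => ae_of_all _ fun θ => (hp_pos i θ).le) hp_int
  have helbo := sum_integral_mul_log_sub_le_log_integral hw hq_nonneg hq_int hℓ_nonneg hqℓ hp_pos
    hN_fin (hN ▸ hN_pos) h1 h2
  rw [← hN, ← mul_sum] at helbo
  rw [ge_iff_le, sum_sub_distrib, ← mul_sum, Matrix.sum_sum_mul_of_sum_col_eq_one hA_col,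
    log_div hN_pos.ne' hK_pos.ne']
  linarith [log_nonpos hK_pos.le hK1]

/-- the distributed evidence lower bound (DELBO).
`K = ∫ ∏ᵢ pᵢ^{1/n}`, `N = ∫ (∏ᵢ ℓᵢ)·(∏ᵢ pᵢ^{1/n})`, `A` doubly stochastic.
The hypothesis `hqℓ` encodes the a.e. finiteness part of the Lebesgue
integrability of `θ ↦ q θ * log (ℓᵢ θ)` (where `log 0 = −∞`). -/
theorem stmt_3 (l n : ℕ) (p ℓ : Fin n → (Fin l → ℝ) → ℝ)
    (hp_meas : ∀ i, Measurable (p i)) (hp_pos : ∀ i θ, 0 < p i θ)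
    (hp_int : ∀ i, ∫ θ, p i θ = 1)
    (hℓ_meas : ∀ i, Measurable (ℓ i)) (hℓ_nonneg : ∀ i θ, 0 ≤ ℓ i θ)
    (A : Matrix (Fin n) (Fin n) ℝ)
    (hA_nonneg : ∀ i j, 0 ≤ A i j)
    (hA_row : ∀ i, ∑ j, A i j = 1) (hA_col : ∀ j, ∑ i, A i j = 1)
    (K N : ℝ)
    (hK : K = ∫ θ, ∏ i, p i θ ^ (1 / (n : ℝ)))
    (hN : N = ∫ θ, (∏ i, ℓ i θ) * ∏ i, p i θ ^ (1 / (n : ℝ)))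
    (hK_pos : 0 < K) (hN_pos : 0 < N)
    (hK_fin : Integrable (fun θ => ∏ i, p i θ ^ (1 / (n : ℝ))))
    (hN_fin : Integrable (fun θ => (∏ i, ℓ i θ) * ∏ i, p i θ ^ (1 / (n : ℝ))))
    (q : (Fin l → ℝ) → ℝ)
    (hq_meas : Measurable q) (hq_nonneg : ∀ θ, 0 ≤ q θ)
    (hq_int : ∫ θ, q θ = 1)
    (hqℓ : ∀ i, ∀ᵐ (θ : Fin l → ℝ) ∂volume, ℓ i θ = 0 → q θ = 0)
    (h1 : ∀ i, Integrable (fun θ => q θ * Real.log (ℓ i θ)))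
    (h2 : ∀ j, Integrable (fun θ => q θ * Real.log (q θ / p j θ))) :
    Real.log (N / K) ≥
      ∑ i, ((∫ θ, q θ * Real.log (ℓ i θ))
        - (1 / (n : ℝ)) * ∑ j, A i j * ∫ θ, q θ * Real.log (q θ / p j θ)) :=
  stmt_3_general l n p ℓ hp_pos hp_int hℓ_nonneg A hA_col K N hK hN hK_pos hN_pos hN_fin q hq_nonneg
    hq_int hqℓ h1 h2
end

section
/- Let p_1,…,p_n be pdfs on ℝ^l that are strictly positive everywhere, set K = ∫ ∏_{i=1}^n p_i(θ)^{1/n} dθ and assume K ∈ (0,∞). Define the normalized geometric average p_g(θ) = ∏_{i=1}^n p_i(θ)^{1/n} / K, and assume θ ↦ p_g(θ) log(p_g(θ)/p_i(θ)) is Lebesgue integrable for every i. Then the consensus error satisfies (1/n) ∑_{i=1}^n KL(p_g‖p_i) = − log K. -/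
/-!
Pointwise, `log p_g = (1/n) ∑ᵢ log pᵢ - log K`, so `∑ᵢ log (p_g / pᵢ) = -n log K` is constant;
multiplying by `p_g` and integrating against `∫ p_g = 1` gives `∑ᵢ KL(p_g‖pᵢ) = -n log K`.
For `n = 0` the geometric average is the constant `1`, whose integral over `ℝ^l` is
`0 ^ l`, so `0 < K` forces `l = 0` and `K = 1`.
-/

open MeasureTheory

open Real in
theorem sum_log_geomMean_div_div {ι : Type*} [Fintype ι] (x : ι → ℝ) (hx : ∀ i, 0 < x i)
    {K : ℝ} (hK : 0 < K) :
    ∑ i, log ((∏ j, x j ^ (1 / (Fintype.card ι : ℝ))) / K / x i)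
      = -(Fintype.card ι * log K) := by
  have hprod : 0 < ∏ j, x j ^ (1 / (Fintype.card ι : ℝ)) :=
    Finset.prod_pos fun j _ => rpow_pos_of_pos (hx j) _
  have hlog : log ((∏ j, x j ^ (1 / (Fintype.card ι : ℝ))) / K)
      = (1 / (Fintype.card ι : ℝ)) * ∑ j, log (x j) - log K := by
    rw [log_div hprod.ne' hK.ne', log_prod fun j _ => (rpow_pos_of_pos (hx j) _).ne',
      Finset.mul_sum]
    simp only [log_rpow (hx _)]
  simp only [log_div (div_pos hprod hK).ne' (hx _).ne', Finset.sum_sub_distrib,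
    Finset.sum_const, Finset.card_univ, nsmul_eq_mul, hlog]
  rcases eq_or_ne (Fintype.card ι : ℝ) 0 with hcard | hcard
  · have : IsEmpty ι := Fintype.card_eq_zero_iff.mp (by exact_mod_cast hcard)
    simp
  · field_simp
    ring

theorem measureReal_univ_fin_pi (l : ℕ) :
    (volume : Measure (Fin l → ℝ)).real Set.univ = 0 ^ l := by
  rw [measureReal_def, volume_pi, Measure.pi_univ]
  simp

theorem stmt_6_general (l n : ℕ) (p : Fin n → (Fin l → ℝ) → ℝ)
    (hp_pos : ∀ i θ, 0 < p i θ)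
    (K : ℝ) (hK : K = ∫ θ, ∏ i, p i θ ^ (1 / (n : ℝ)))
    (hK_pos : 0 < K)
    (pg : (Fin l → ℝ) → ℝ)
    (hpg : ∀ θ, pg θ = (∏ i, p i θ ^ (1 / (n : ℝ))) / K)
    (hint : ∀ i, Integrable (fun θ => pg θ * Real.log (pg θ / p i θ))) :
    (1 / (n : ℝ)) * ∑ i, ∫ θ, pg θ * Real.log (pg θ / p i θ) = - Real.log K := by
  rcases eq_or_ne n 0 with rfl | hn
  · have hK_eq : K = 0 ^ l := by simp [hK, measureReal_univ_fin_pi]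
    have hK_one : K = 1 := by
      rcases Nat.eq_zero_or_pos l with rfl | hl
      · simpa using hK_eq
      · exact absurd hK_pos (by simp [hK_eq, zero_pow hl.ne'])
    simp [hK_one]
  · have hpg_integral : ∫ θ, pg θ = 1 := by
      simp_rw [hpg, integral_div, ← hK, div_self hK_pos.ne']
    have hsum : ∀ θ, ∑ i, pg θ * Real.log (pg θ / p i θ) = -(n * Real.log K) * pg θ := by
      intro θ
      have hlog := sum_log_geomMean_div_div (fun i => p i θ) (fun i => hp_pos i θ) hK_pos
      simp only [Fintype.card_fin, ← hpg θ] at hlog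
      rw [← Finset.mul_sum, hlog, mul_comm]
    rw [← integral_finsetSum _ fun i _ => hint i]
    simp_rw [hsum]
    rw [integral_const_mul, hpg_integral]
    field_simp

/-- the consensus error satisfies
`(1/n) ∑ᵢ KL(p_g‖pᵢ) = −log K`, where `p_g = ∏ᵢ pᵢ^{1/n}/K` is the normalized
geometric average of strictly positive pdfs and `K` its normalization. -/
theorem stmt_6 (l n : ℕ) (p : Fin n → (Fin l → ℝ) → ℝ)
    (hp_meas : ∀ i, Measurable (p i)) (hp_pos : ∀ i θ, 0 < p i θ)
    (hp_int : ∀ i, ∫ θ, p i θ = 1)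
    (K : ℝ) (hK : K = ∫ θ, ∏ i, p i θ ^ (1 / (n : ℝ)))
    (hK_pos : 0 < K)
    (hK_fin : Integrable (fun θ => ∏ i, p i θ ^ (1 / (n : ℝ))))
    (pg : (Fin l → ℝ) → ℝ)
    (hpg : ∀ θ, pg θ = (∏ i, p i θ ^ (1 / (n : ℝ))) / K)
    (hint : ∀ i, Integrable (fun θ => pg θ * Real.log (pg θ / p i θ))) :
    (1 / (n : ℝ)) * ∑ i, ∫ θ, pg θ * Real.log (pg θ / p i θ) = - Real.log K :=
  stmt_6_general l n p hp_pos K hK hK_pos pg hpg hint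
end

section
/- Let p_1,…,p_n be pdfs on ℝ^l that are strictly positive everywhere. Then ∫ ∏_{i=1}^n p_i(θ)^{1/n} dθ = 1 if and only if p_1 = p_2 = ⋯ = p_n almost everywhere. -/
/-!
By weighted AM-GM, the geometric mean `∏ i, p i ^ w i` lies below the arithmetic mean
`∑ i, w i * p i`, whose integral is `∑ i, w i * ∫ p i` (which is `1` for densities). Between
integrable functions `f ≤ g` the integrals agree iff `f = g` a.e., and by the equality case of
AM-GM with positive weights, the two means agree at a point iff all the `p i` agree there.
-/

open MeasureTheory

namespace MeasureTheory

variable {α : Type*} [MeasurableSpace α] {μ : Measure α}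

theorem integral_eq_integral_iff_of_ae_le {f g : α → ℝ} (hf : Integrable f μ)
    (hg : Integrable g μ) (hfg : f ≤ᵐ[μ] g) : ∫ x, f x ∂μ = ∫ x, g x ∂μ ↔ f =ᵐ[μ] g := by
  rw [eq_comm, ← sub_eq_zero, ← integral_sub hg hf,
    integral_eq_zero_iff_of_nonneg_ae (hfg.mono fun x hx => sub_nonneg.2 hx) (hg.sub hf)]
  refine ⟨fun h => ?_, fun h => ?_⟩
  · filter_upwards [h] with x hx
    exact (sub_eq_zero.1 hx).symm
  · filter_upwards [h] with x hx
    simp [hx]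

section GeomMean

open Finset

variable {ι : Type*} [Fintype ι] {w : ι → ℝ} {p : ι → α → ℝ}

theorem ae_geom_mean_le_arith_mean (hw : ∀ i, 0 ≤ w i) (hw₁ : ∑ i, w i = 1)
    (hp : ∀ i, 0 ≤ᵐ[μ] p i) :
    (fun x => ∏ i, p i x ^ w i) ≤ᵐ[μ] fun x => ∑ i, w i * p i x := by
  filter_upwards [ae_all_iff.2 hp] with x hx
  exact Real.geom_mean_le_arith_mean_weighted univ w (p · x) (fun i _ => hw i) hw₁ fun i _ => hx i

theorem integrable_geom_mean (hw : ∀ i, 0 ≤ w i) (hw₁ : ∑ i, w i = 1)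
    (hp : ∀ i, 0 ≤ᵐ[μ] p i) (hpi : ∀ i, Integrable (p i) μ) :
    Integrable (fun x => ∏ i, p i x ^ w i) μ := by
  refine (integrable_finsetSum univ fun i _ => (hpi i).const_mul (w i)).mono' ?_ ?_
  · exact (aemeasurable_fun_prod _ fun i _ =>
      (hpi i).aemeasurable.pow_const (w i)).aestronglyMeasurable
  · filter_upwards [ae_all_iff.2 hp, ae_geom_mean_le_arith_mean hw hw₁ hp] with x hx hle
    rw [Real.norm_of_nonneg (prod_nonneg fun i _ => Real.rpow_nonneg (hx i) _)]
    simpa using hle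

theorem integral_geom_mean_eq_iff (hw : ∀ i, 0 < w i) (hw₁ : ∑ i, w i = 1)
    (hp : ∀ i, 0 ≤ᵐ[μ] p i) (hpi : ∀ i, Integrable (p i) μ) :
    ∫ x, ∏ i, p i x ^ w i ∂μ = ∑ i, w i * ∫ x, p i x ∂μ ↔ ∀ i j, p i =ᵐ[μ] p j := by
  have hw₀ : ∀ i, 0 ≤ w i := fun i => (hw i).le
  have h_arith : ∑ i, w i * ∫ x, p i x ∂μ = ∫ x, ∑ i, w i * p i x ∂μ := by
    rw [integral_finsetSum _ fun i _ => (hpi i).const_mul (w i)]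
    simp only [integral_const_mul]
  rw [h_arith, integral_eq_integral_iff_of_ae_le (integrable_geom_mean hw₀ hw₁ hp hpi)
    (integrable_finsetSum univ fun i _ => (hpi i).const_mul (w i))
    (ae_geom_mean_le_arith_mean hw₀ hw₁ hp)]
  have h_amgm : ∀ᵐ x ∂μ, ∏ i, p i x ^ w i = ∑ i, w i * p i x ↔ ∀ i j, p i x = p j x := by
    filter_upwards [ae_all_iff.2 hp] with x hx
    simpa using Real.geom_mean_eq_arith_mean_weighted_iff_of_pos univ w (p · x)
      (fun i _ => hw i) hw₁ fun i _ => hx i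
  simp only [Filter.EventuallyEq, Filter.eventually_congr h_amgm, ae_all_iff]

end GeomMean

end MeasureTheory

theorem stmt_7_general (l n : ℕ) (hn : 1 ≤ n) (p : Fin n → (Fin l → ℝ) → ℝ)
    (hp_pos : ∀ i θ, 0 < p i θ)
    (hp_int : ∀ i, ∫ θ, p i θ = 1) :
    (∫ θ, ∏ i, p i θ ^ (1 / (n : ℝ))) = 1 ↔
      ∀ i j, p i =ᵐ[(volume : Measure (Fin l → ℝ))] p j := by
  have hw : ∀ _ : Fin n, 0 < 1 / (n : ℝ) := fun _ => by positivity
  have hw₁ : ∑ _ : Fin n, 1 / (n : ℝ) = 1 := by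
    simp only [Finset.sum_const, Finset.card_univ, Fintype.card_fin, nsmul_eq_mul]
    field_simp
  have hp : ∀ i, 0 ≤ᵐ[volume] p i := fun i => ae_of_all _ fun θ => (hp_pos i θ).le
  have hpi : ∀ i, Integrable (p i) := fun i => integrable_of_integral_eq_one (hp_int i)
  rw [← integral_geom_mean_eq_iff hw hw₁ hp hpi]
  simp only [hp_int, mul_one, hw₁]

/-- the equally-weighted geometric average of strictly positive
pdfs integrates to one if and only if all the pdfs agree almost everywhere. -/
theorem stmt_7 (l n : ℕ) (hn : 1 ≤ n) (p : Fin n → (Fin l → ℝ) → ℝ)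
    (hp_meas : ∀ i, Measurable (p i)) (hp_pos : ∀ i θ, 0 < p i θ)
    (hp_int : ∀ i, ∫ θ, p i θ = 1) :
    (∫ θ, ∏ i, p i θ ^ (1 / (n : ℝ))) = 1 ↔
      ∀ i j, p i =ᵐ[(volume : Measure (Fin l → ℝ))] p j :=
  stmt_7_general l n hn p hp_pos hp_int
end

section
/- Let m ∈ ℝ, s > 0, and ξ ∈ ℝ, and let Γ denote the standard normal cumulative distribution function. Then ∫_ℝ Γ(ξ u) · (2π s²)^{-1/2} exp(−(u−m)²/(2s²)) du = Γ( ξ m / √(1 + ξ² s²) ). In other words, the expectation of the inverse probit function u ↦ Γ(ξ u) under a Gaussian distribution with mean m and variance s² is Γ(ξ m/√(1+ξ²s²)). -/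
/-!
Let `Z ~ 𝓝(0, 1)` and `U ~ 𝓝(m, s²)` be independent. Then `Γ(ξu) = P(Z - ξu ≤ 0)`, so the integral
is `P(Z - ξU ≤ 0)`. Since `Z - ξU ~ 𝓝(-ξm, 1 + ξ²s²)` (the law of a sum of independent Gaussians is
the convolution of their laws), standardizing gives `Γ(ξm / √(1 + ξ²s²))`.
-/

open MeasureTheory ProbabilityTheory Set Real
open scoped NNReal

namespace ProbabilityTheory

lemma cdf_conv (μ ν : Measure ℝ) [IsProbabilityMeasure μ] [IsProbabilityMeasure ν] (c : ℝ) :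
    cdf (μ ∗ ν) c = ∫ x, cdf ν (c - x) ∂μ := by
  have hmeas : Measurable fun x => ν (Iic (c - x)) :=
    Antitone.measurable fun x y hxy => measure_mono (Iic_subset_Iic.2 (by linarith))
  simp only [cdf_eq_real, measureReal_def]
  rw [Measure.conv, Measure.map_apply measurable_add measurableSet_Iic,
    Measure.prod_apply (measurable_add measurableSet_Iic),
    integral_toReal hmeas.aemeasurable (ae_of_all _ fun _ => measure_lt_top _ _)]
  congr 2 with x
  congr 1 with y
  simp [le_sub_iff_add_le']

lemma gaussianReal_eq_map_gaussianReal_zero_one (μ : ℝ) (v : ℝ≥0) :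
    gaussianReal μ v = (gaussianReal 0 1).map (fun z => √(v : ℝ) * z + μ) := by
  rw [show (fun z => √(v : ℝ) * z + μ) = (· + μ) ∘ (√(v : ℝ) * ·) from rfl,
    ← Measure.map_map (by fun_prop) (by fun_prop), gaussianReal_map_const_mul,
    gaussianReal_map_add_const]
  congr 1
  · simp
  · ext; simp

lemma cdf_gaussianReal (μ : ℝ) {v : ℝ≥0} (hv : v ≠ 0) (x : ℝ) :
    cdf (gaussianReal μ v) x = cdf (gaussianReal 0 1) ((x - μ) / √(v : ℝ)) := by
  have hσ : 0 < √(v : ℝ) := by positivity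
  rw [cdf_eq_real, cdf_eq_real, gaussianReal_eq_map_gaussianReal_zero_one μ v,
    map_measureReal_apply (by fun_prop) measurableSet_Iic]
  congr 1 with z
  simp [le_div_iff₀ hσ, mul_comm, le_sub_iff_add_le]

lemma cdf_gaussianReal_zero_one_eq_integral (x : ℝ) :
    cdf (gaussianReal 0 1) x = ∫ t in Iic x, exp (-(t ^ 2) / 2) / √(2 * π) := by
  rw [cdf_eq_real, measureReal_def, gaussianReal_apply_eq_integral 0 one_ne_zero,
    ENNReal.toReal_ofReal (setIntegral_nonneg measurableSet_Iic
      fun _ _ => gaussianPDFReal_nonneg _ _ _)]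
  simp [gaussianPDFReal, div_eq_inv_mul]

lemma integral_cdf_gaussianReal_mul (m ξ : ℝ) (v : ℝ≥0) :
    ∫ u, cdf (gaussianReal 0 1) (ξ * u) ∂gaussianReal m v
      = cdf (gaussianReal 0 1) (ξ * m / √(1 + ξ ^ 2 * v)) := by
  have hvar : (.mk ((-ξ) ^ 2) (sq_nonneg _) * v + 1 : ℝ≥0) ≠ 0 := by positivity
  calc ∫ u, cdf (gaussianReal 0 1) (ξ * u) ∂gaussianReal m v
      = ∫ w, cdf (gaussianReal 0 1) (0 - w) ∂(gaussianReal m v).map (-ξ * ·) := by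
        have hF : Measurable fun w => cdf (gaussianReal 0 1) (0 - w) :=
          (monotone_cdf _).measurable.comp (measurable_const_sub 0)
        rw [integral_map (by fun_prop) hF.aestronglyMeasurable]
        simp
    _ = cdf (gaussianReal (-ξ * m + 0) (.mk ((-ξ) ^ 2) (sq_nonneg _) * v + 1)) 0 := by
        rw [gaussianReal_map_const_mul, ← gaussianReal_conv_gaussianReal, cdf_conv]
    _ = cdf (gaussianReal 0 1) (ξ * m / √(1 + ξ ^ 2 * v)) := by
        rw [cdf_gaussianReal _ hvar]
        congr 1
        simp [add_comm]

end ProbabilityTheory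

/-- the expectation of the inverse probit function `u ↦ Γ(ξu)`
(with `Γ` the standard normal cdf) under a Gaussian with mean `m` and
variance `s²` equals `Γ(ξm/√(1+ξ²s²))`. -/
theorem stmt_9 (m s ξ : ℝ) (hs : 0 < s)
    (Γ : ℝ → ℝ)
    (hΓ : ∀ x, Γ x = ∫ t in Set.Iic x, Real.exp (-(t ^ 2) / 2) / Real.sqrt (2 * Real.pi)) :
    (∫ u, Γ (ξ * u) *
        (Real.exp (-((u - m) ^ 2) / (2 * s ^ 2)) / Real.sqrt (2 * Real.pi * s ^ 2)))
      = Γ (ξ * m / Real.sqrt (1 + ξ ^ 2 * s ^ 2)) := by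
  set v : ℝ≥0 := ⟨s ^ 2, sq_nonneg s⟩
  have hv_coe : (v : ℝ) = s ^ 2 := rfl
  have hv : v ≠ 0 := by
    rw [← NNReal.coe_ne_zero, hv_coe]
    positivity
  have hΓ_cdf : Γ = cdf (gaussianReal 0 1) := funext fun x => by
    rw [hΓ, cdf_gaussianReal_zero_one_eq_integral]
  calc (∫ u, Γ (ξ * u) *
        (Real.exp (-((u - m) ^ 2) / (2 * s ^ 2)) / Real.sqrt (2 * Real.pi * s ^ 2)))
      = ∫ u, gaussianPDFReal m v u • cdf (gaussianReal 0 1) (ξ * u) := by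
        congr 1 with u
        simp only [hΓ_cdf, gaussianPDFReal, hv_coe, smul_eq_mul]
        ring
    _ = Γ (ξ * m / Real.sqrt (1 + ξ ^ 2 * s ^ 2)) := by
        rw [← integral_gaussianReal_eq_integral_smul hv, integral_cdf_gaussianReal_mul, hΓ_cdf,
          hv_coe]
end
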